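/- arXiv:1407.1283 — 3 statements merged into one kernel-verified Lean document; each statement's English description precedes it below -/
import Mathlib

section
/- Suppose A is a self-adjoint operator, φ is skew-symmetric with φξ = 0, Aξ = aξ, and the identity AφA - (a/2)(Aφ + φA) - cε·φ = 0 holds with c ≠ 0. If X is an eigenvector of A with AX = κX and 2κ ≠ a, then φX is an eigenvector of A with eigenvalue κ̄ = (κa + 2cε)/(2κ - a). -/
/-- if AX = κX with 2κ ≠ a, then A(φX) = κ̄·φX where
κ̄ = (κa + 2cε)/(2κ - a). -/
theorem principal_curvature_of_phi
    {V : Type*} [AddCommGroup V] [Module ℝ V]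
    (B : V →ₗ[ℝ] V →ₗ[ℝ] ℝ)
    (hBsymm : ∀ X Y : V, B X Y = B Y X)
    (hBnondeg : ∀ X : V, (∀ Y : V, B X Y = 0) → X = 0)
    (ε : ℝ) (hε : ε = 1 ∨ ε = -1)
    (a c : ℝ) (hc : c ≠ 0)
    (A : V →ₗ[ℝ] V) (φ : V →ₗ[ℝ] V) (ξ : V)
    (hAsa : ∀ X Y : V, B (A X) Y = B X (A Y))
    (hφskew : ∀ X Y : V, B (φ X) Y = - B X (φ Y))
    (hφξ : φ ξ = 0)
    (hHopf : A ξ = a • ξ)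
    (hid : ∀ X : V,
      A (φ (A X)) - (a / 2) • (A (φ X) + φ (A X)) - (c * ε) • φ X = 0) :
    ∀ (κ : ℝ) (X : V), A X = κ • X → 2 * κ ≠ a →
      A (φ X) = ((κ * a + 2 * c * ε) / (2 * κ - a)) • φ X := by
  intro κ X hX hκ
  have h := hid X
  rw [hX, map_smul, map_smul] at h
  have h2 : (κ - a / 2) • A (φ X) = (a / 2 * κ + c * ε) • φ X := by
    have := h
    rw [smul_add] at this
    have h3 : κ • A (φ X) - (a / 2) • A (φ X) - (a / 2) • (κ • φ X)
        - (c * ε) • φ X = 0 := by linear_combination (norm := module) this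
    have h4 : (κ - a / 2) • A (φ X) - (a / 2 * κ + c * ε) • φ X = 0 := by
      linear_combination (norm := module) h3
    linear_combination (norm := module) h4
  have hne : κ - a / 2 ≠ 0 := fun h0 => hκ (by linarith [sub_eq_zero.mp h0])
  have := congrArg (fun v => (κ - a / 2)⁻¹ • v) h2
  simp only [smul_smul, inv_mul_cancel₀ hne, one_smul] at this
  rw [this]
  congr 1
  have hne2 : 2 * κ - a ≠ 0 := sub_ne_zero.mpr hκ
  rw [eq_div_iff hne2, inv_mul_eq_div, div_mul_eq_mul_div, div_eq_iff hne]
  ring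
end

section
/- There exists no non-degenerate real hypersurface with parallel shape operator (∇̄A = 0) in a pseudo-Riemannian complex space form or para-complex space form with holomorphic curvature 4c, c = ±1: the Codazzi equation 0 = c(η(X)φY − η(Y)φX + 2ε⟨X,φY⟩ξ), evaluated at a nonzero horizontal X and Y = ξ, forces c = 0. -/
/-- no hypersurfaces with parallel shape operator.  If ∇̄A = 0
then the Codazzi equation reads 0 = c(η(X)φY − η(Y)φX + 2ε⟨X,φY⟩ξ);
evaluating at a horizontal X with φX ≠ 0 and Y = ξ forces c = 0,
contradicting c = ±1. -/
theorem no_parallel_shape_operator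
    {V : Type*} [AddCommGroup V] [Module ℝ V]
    (B : V →ₗ[ℝ] V →ₗ[ℝ] ℝ)
    (hBsymm : ∀ X Y : V, B X Y = B Y X)
    (ε c : ℝ) (hε : ε = 1 ∨ ε = -1) (hc : c = 1 ∨ c = -1)
    (φ : V →ₗ[ℝ] V) (η : V → ℝ) (ξ : V)
    (hφξ : φ ξ = 0) (hηξ : η ξ = 1)
    (hCodazzi : ∀ X Y : V,
      (0 : V) = c • (η X • φ Y - η Y • φ X + (2 * ε * B X (φ Y)) • ξ))
    (X : V) (hXhor : η X = 0) (hφX : φ X ≠ 0) :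
    False := by
  have h := hCodazzi X ξ
  rw [hφξ, hXhor, hηξ] at h
  simp only [map_zero, smul_zero, zero_sub, one_smul, mul_zero, zero_smul, add_zero,
    LinearMap.map_zero] at h
  have hc0 : c ≠ 0 := by rcases hc with h | h <;> rw [h] <;> norm_num
  have : φ X = 0 := by
    have := h.symm
    rw [smul_neg, neg_eq_zero] at this
    exact (smul_eq_zero.mp this).resolve_left hc0
  exact hφX this
end

section
/- On a Hopf hypersurface (Aξ = aξ), the identity AφA − (a/2)(Aφ + φA) − cε·φ = 0 holds, where the identity is derived from the relation ⟨(aId − A)φAX, Y⟩ − ⟨(aId − A)φAY, X⟩ = 2cε⟨X, φY⟩ valid for all tangent X, Y, together with self-adjointness of A and skew-symmetry of φ. -/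
/-- from ⟨(aId−A)φAX, Y⟩ − ⟨(aId−A)φAY, X⟩ = 2cε⟨X,φY⟩,
self-adjointness of A and skew-symmetry of φ, derive
AφA − (a/2)(Aφ + φA) − cε·φ = 0. -/
theorem key_operator_identity
    {V : Type*} [AddCommGroup V] [Module ℝ V]
    (B : V →ₗ[ℝ] V →ₗ[ℝ] ℝ)
    (hBsymm : ∀ X Y : V, B X Y = B Y X)
    (hBnondeg : ∀ X : V, (∀ Y : V, B X Y = 0) → X = 0)
    (ε a c : ℝ) (hε : ε = 1 ∨ ε = -1)
    (A : V →ₗ[ℝ] V) (φ : V →ₗ[ℝ] V)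
    (hAsa : ∀ X Y : V, B (A X) Y = B X (A Y))
    (hφskew : ∀ X Y : V, B (φ X) Y = - B X (φ Y))
    (hrel : ∀ X Y : V,
      B (a • φ (A X) - A (φ (A X))) Y - B (a • φ (A Y) - A (φ (A Y))) X
        = 2 * c * ε * B X (φ Y)) :
    ∀ X : V,
      A (φ (A X)) - (a / 2) • (A (φ X) + φ (A X)) - (c * ε) • φ X = 0 := by
  intro X
  apply hBnondeg
  intro Y
  have h1 : B (A (φ (A Y))) X = - B (A (φ (A X))) Y := by
    calc B (A (φ (A Y))) X = B (φ (A Y)) (A X) := hAsa _ _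
      _ = - B (A Y) (φ (A X)) := hφskew _ _
      _ = - B Y (A (φ (A X))) := by rw [hAsa]
      _ = - B (A (φ (A X))) Y := by rw [hBsymm]
  have h2 : B (φ (A Y)) X = - B (A (φ X)) Y := by
    calc B (φ (A Y)) X = - B (A Y) (φ X) := hφskew _ _
      _ = - B Y (A (φ X)) := by rw [hAsa]
      _ = - B (A (φ X)) Y := by rw [hBsymm]
  have h3 : B Y (φ X) = B (φ X) Y := (hBsymm _ _).symm
  have hr := hrel Y X
  simp only [map_sub, LinearMap.sub_apply, map_smul, LinearMap.smul_apply,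
    smul_eq_mul] at hr
  rw [h1, h2, h3] at hr
  simp only [map_sub, map_add, LinearMap.sub_apply, LinearMap.add_apply, map_smul,
    LinearMap.smul_apply, smul_eq_mul]
  linear_combination hr / 2
end
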